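/- Let α be the all-ones composition with r ≥ 1 parts, and let k > r. Then a word w over the alphabet {L, R, U_1, …, U_k} is admissible for α (with respect to the poset 𝔑) with w.α of width k if and only if w = u s w′, where u is a (possibly empty) word over {U_1, …, U_k}, s ∈ {L, R}, w′ is admissible for α with w′.α of width k−1, and it is not the case that s = R and w′ = L^{k−1−r} (the word consisting of k−1−r letters L). -/

import Mathlib

/-- A composition: a finite list of positive integers. -/
def IsComposition (P : List ℕ) : Prop := ∀ x ∈ P, 0 < x

/-- The alphabet `{L, R, U_1, U_2, …}` acting on compositions. -/
inductive Letter where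
  | L : Letter
  | R : Letter
  | U : ℕ → Letter
deriving DecidableEq

/-- The partial action of a letter: `L` prepends a part 1, `R` appends a part 1,
and `U j` increases the `j`-th part by 1 (defined when `1 ≤ j ≤` width). -/
def act : Letter → List ℕ → Option (List ℕ)
  | .L, P => some (1 :: P)
  | .R, P => some (P ++ [1])
  | .U j, P =>
    if 1 ≤ j ∧ j ≤ P.length then some (P.set (j - 1) (P.getD (j - 1) 0 + 1)) else none

/-- The partial action of a word `w = w_m ⋯ w_1` (a list whose head is `w_m`):
the rightmost letter `w_1` acts first. -/
def actWord : List Letter → List ℕ → Option (List ℕ)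
  | [], P => some P
  | t :: w, P => (actWord w P).bind (act t)

/-- A word is admissible for a composition (with respect to the poset 𝔑) if at
every step the action is defined, and the letter `R` is never applied to an
all-ones composition (since there `L` and `R` have the same effect and `L` has
higher priority). -/
def Admissible : List Letter → List ℕ → Prop
  | [], _ => True
  | t :: w, P =>
    Admissible w P ∧
      ∃ Q, actWord w P = some Q ∧ (act t Q).isSome ∧
        (t = Letter.R → ¬ ∀ a ∈ Q, a = 1)

/-!
A letter `U_j` keeps the width and `L`, `R` raise it by one, so a word taking the all-ones
composition of width `r < k` to width `k` has a last width-raising letter `s ∈ {L, R}`, after which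
only `U`'s act; this splits the word as `u s w'`. Conversely `u` never obstructs admissibility, and
`s` does only when `s = R` and `w'.α` is all-ones. Since `U_j` creates a part `≥ 2` that no later
letter removes, and `R` is never applied to an all-ones composition, the only admissible words
producing an all-ones composition are the powers of `L`, here `L^{k-1-r}`.
-/

open List

theorem actWord_append (a b : List Letter) (P : List ℕ) :
    actWord (a ++ b) P = (actWord b P).bind (actWord a) := by
  induction a with
  | nil => simp [actWord]
  | cons t a ih => simp only [cons_append, actWord, ih, Option.bind_assoc]

theorem admissible_cons_iff {t : Letter} {w : List Letter} {P Q : List ℕ}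
    (h : actWord w P = some Q) :
    Admissible (t :: w) P ↔
      Admissible w P ∧ (act t Q).isSome ∧ (t = Letter.R → ¬ ∀ a ∈ Q, a = 1) := by
  simp [Admissible, h]

theorem Admissible.append {a b : List Letter} {P Q : List ℕ} (hb : Admissible b P)
    (h : actWord b P = some Q) (ha : Admissible a Q) : Admissible (a ++ b) P := by
  induction a with
  | nil => exact hb
  | cons t a ih =>
    obtain ⟨ha, Q', hQ', hact⟩ := ha
    refine ⟨ih ha, Q', ?_, hact⟩
    show actWord (a ++ b) P = some Q'
    rw [actWord_append, h, Option.bind_some, hQ']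

theorem act_U_eq_some_iff {j : ℕ} {P Q : List ℕ} :
    act (Letter.U j) P = some Q ↔
      1 ≤ j ∧ j ≤ P.length ∧ Q = P.set (j - 1) (P.getD (j - 1) 0 + 1) := by
  simp only [act]
  split_ifs with hj
  · simp [hj, eq_comm]
  · simpa using fun h1 h2 _ => hj ⟨h1, h2⟩

theorem length_eq_of_act_U {j : ℕ} {P Q : List ℕ} (h : act (Letter.U j) P = some Q) :
    Q.length = P.length := by
  obtain ⟨-, -, rfl⟩ := act_U_eq_some_iff.mp h
  simp

theorem IsComposition.act {t : Letter} {P Q : List ℕ} (hP : IsComposition P)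
    (h : act t P = some Q) : IsComposition Q := by
  cases t with
  | L => cases h; simpa [IsComposition] using hP
  | R => cases h; simpa [IsComposition, or_imp, forall_and] using hP
  | U j =>
    obtain ⟨-, -, rfl⟩ := act_U_eq_some_iff.mp h
    intro a ha
    rcases mem_or_eq_of_mem_set ha with ha | rfl
    exacts [hP a ha, Nat.succ_pos _]

theorem IsComposition.actWord {w : List Letter} {P Q : List ℕ} (hP : IsComposition P)
    (h : actWord w P = some Q) : IsComposition Q := by
  induction w generalizing Q with
  | nil => cases h; exact hP
  | cons t w ih =>
    obtain ⟨Q', hQ', hact⟩ := Option.bind_eq_some_iff.mp h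
    exact (ih hQ').act hact

theorem not_allOnes_of_act_U {j : ℕ} {P Q : List ℕ} (hP : IsComposition P)
    (h : act (Letter.U j) P = some Q) : ¬ ∀ a ∈ Q, a = 1 := by
  obtain ⟨hj1, hj2, rfl⟩ := act_U_eq_some_iff.mp h
  have hj : j - 1 < P.length := by omega
  intro h1
  have hset := h1 _ (mem_set hj _)
  rw [getD_eq_getElem P 0 hj] at hset
  have := hP _ (getElem_mem hj)
  omega

theorem actWord_replicate_L (n : ℕ) (P : List ℕ) :
    actWord (replicate n Letter.L) P = some (replicate n 1 ++ P) := by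
  induction n with
  | zero => rfl
  | succ n ih => simp [replicate_succ, actWord, ih, act]

theorem eq_replicate_L_of_allOnes {w : List Letter} {P Q : List ℕ} (hP : IsComposition P)
    (hw : Admissible w P) (h : actWord w P = some Q) (h1 : ∀ a ∈ Q, a = 1) :
    w = replicate w.length Letter.L ∧ Q.length = P.length + w.length := by
  induction w generalizing Q with
  | nil => cases h; simp
  | cons t w ih =>
    obtain ⟨Q', hQ', hact⟩ := Option.bind_eq_some_iff.mp h
    obtain ⟨hw', -, hR⟩ := (admissible_cons_iff hQ').mp hw
    cases t with
    | L =>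
      cases hact
      obtain ⟨hwL, hlen⟩ := ih hw' hQ' fun a ha => h1 a (mem_cons_of_mem _ ha)
      refine ⟨by rw [length_cons, replicate_succ, ← hwL], ?_⟩
      simp [hlen]
      omega
    | R =>
      cases hact
      exact absurd (fun a ha => h1 a (mem_append_left _ ha)) (hR rfl)
    | U j => exact absurd h1 (not_allOnes_of_act_U (hP.actWord hQ') hact)

theorem admissible_of_forall_U {k : ℕ} {u : List Letter}
    (hu : ∀ t ∈ u, ∃ m, 1 ≤ m ∧ m ≤ k ∧ t = Letter.U m) {Q : List ℕ} (hQ : Q.length = k) :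
    Admissible u Q ∧ ∃ Q', actWord u Q = some Q' ∧ Q'.length = k := by
  induction u with
  | nil => exact ⟨trivial, Q, rfl, hQ⟩
  | cons t u ih =>
    obtain ⟨hA, Q', hQ', hlen⟩ := ih fun t ht => hu t (mem_cons_of_mem _ ht)
    obtain ⟨m, hm1, hm2, rfl⟩ := hu _ mem_cons_self
    have hact : act (Letter.U m) Q' = some (Q'.set (m - 1) (Q'.getD (m - 1) 0 + 1)) :=
      act_U_eq_some_iff.mpr ⟨hm1, by omega, rfl⟩
    refine ⟨(admissible_cons_iff hQ').mpr ⟨hA, by simp [hact], by simp⟩,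
      Q'.set (m - 1) (Q'.getD (m - 1) 0 + 1), ?_, ?_⟩
    · simp [actWord, hQ', hact]
    · simp [hlen]

theorem allOnes_iff_eq_replicate_L {r : ℕ} {w : List Letter} {Q : List ℕ}
    (hw : Admissible w (replicate r 1)) (h : actWord w (replicate r 1) = some Q) :
    (∀ a ∈ Q, a = 1) ↔ w = replicate (Q.length - r) Letter.L := by
  constructor
  · intro h1
    have hα : IsComposition (replicate r 1) := fun a ha => by simp [eq_of_mem_replicate ha]
    obtain ⟨hwL, hlen⟩ := eq_replicate_L_of_allOnes hα hw h h1
    rwa [hlen, length_replicate, Nat.add_sub_cancel_left]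
  · intro hw
    rw [hw, actWord_replicate_L, Option.some_inj] at h
    intro a ha
    rw [← h] at ha
    rcases mem_append.mp ha with ha | ha <;> exact eq_of_mem_replicate ha

theorem exists_eq_append_cons_of_admissible {k : ℕ} {P : List ℕ} (hP : P.length < k)
    {w : List Letter}
    (hw : ∀ t ∈ w, t = Letter.L ∨ t = Letter.R ∨ ∃ j, 1 ≤ j ∧ j ≤ k ∧ t = Letter.U j)
    (hA : Admissible w P) {Q : List ℕ} (h : actWord w P = some Q) (hQ : Q.length = k) :
    ∃ u s w' Q', (∀ t ∈ u, ∃ m, 1 ≤ m ∧ m ≤ k ∧ t = Letter.U m) ∧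
      (s = Letter.L ∨ s = Letter.R) ∧ Admissible w' P ∧ actWord w' P = some Q' ∧
      Q'.length = k - 1 ∧ (s = Letter.R → ¬ ∀ a ∈ Q', a = 1) ∧ w = u ++ s :: w' := by
  induction w generalizing Q with
  | nil => cases h; omega
  | cons t w ih =>
    obtain ⟨Q', hQ', hact⟩ := Option.bind_eq_some_iff.mp h
    obtain ⟨hA', -, hR⟩ := (admissible_cons_iff hQ').mp hA
    rcases hw t mem_cons_self with rfl | rfl | ⟨j, hj1, hjk, rfl⟩
    · cases hact
      exact ⟨[], _, w, Q', by simp, .inl rfl, hA', hQ', by simp at hQ; omega, hR, rfl⟩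
    · cases hact
      exact ⟨[], _, w, Q', by simp, .inr rfl, hA', hQ', by simp at hQ; omega, hR, rfl⟩
    · obtain ⟨u, s, w', Q'', hu, hs, hw', hQ'', hlen, hR', rfl⟩ :=
        ih (fun t ht => hw t (mem_cons_of_mem _ ht)) hA' hQ' (length_eq_of_act_U hact ▸ hQ)
      refine ⟨Letter.U j :: u, s, w', Q'', ?_, hs, hw', hQ'', hlen, hR', rfl⟩
      rintro t (_ | ⟨_, ht⟩)
      exacts [⟨j, hj1, hjk, rfl⟩, hu t ht]

theorem admissible_append_cons {k : ℕ} {P : List ℕ} {u w' : List Letter} {s : Letter}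
    {Q' : List ℕ} (hu : ∀ t ∈ u, ∃ m, 1 ≤ m ∧ m ≤ k ∧ t = Letter.U m)
    (hs : s = Letter.L ∨ s = Letter.R) (hw' : Admissible w' P) (h : actWord w' P = some Q')
    (hQ' : Q'.length + 1 = k) (hR : s = Letter.R → ¬ ∀ a ∈ Q', a = 1) :
    Admissible (u ++ s :: w') P ∧ ∃ Q, actWord (u ++ s :: w') P = some Q ∧ Q.length = k := by
  obtain ⟨Q₁, hQ₁, hlen₁⟩ : ∃ Q₁, act s Q' = some Q₁ ∧ Q₁.length = k := by
    rcases hs with rfl | rfl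
    exacts [⟨_, rfl, by simp [← hQ']⟩, ⟨_, rfl, by simp [← hQ']⟩]
  have hsw' : Admissible (s :: w') P := (admissible_cons_iff h).mpr ⟨hw', by simp [hQ₁], hR⟩
  have hactsw' : actWord (s :: w') P = some Q₁ := by simp [actWord, h, hQ₁]
  obtain ⟨hAu, Q, hQ, hlen⟩ := admissible_of_forall_U hu hlen₁
  exact ⟨hsw'.append hactsw' hAu, Q, by simp [actWord_append, hactsw', hQ], hlen⟩

theorem stmt16_general (r : ℕ) (α : List ℕ) (hα : α = List.replicate r 1)
    (k : ℕ) (hk : r < k) :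
    ∀ w : List Letter,
      (∀ t ∈ w, t = Letter.L ∨ t = Letter.R ∨ ∃ j, 1 ≤ j ∧ j ≤ k ∧ t = Letter.U j) →
      ((Admissible w α ∧ ∃ Q, actWord w α = some Q ∧ Q.length = k) ↔
        ∃ u : List Letter, ∃ s : Letter, ∃ w' : List Letter,
          (∀ t ∈ u, ∃ m, 1 ≤ m ∧ m ≤ k ∧ t = Letter.U m) ∧
          (s = Letter.L ∨ s = Letter.R) ∧
          Admissible w' α ∧ (∃ Q', actWord w' α = some Q' ∧ Q'.length = k - 1) ∧
          ¬(s = Letter.R ∧ w' = List.replicate (k - 1 - r) Letter.L) ∧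
          w = u ++ s :: w') := by
  subst hα
  intro w hw
  constructor
  · rintro ⟨hA, Q, hQ, hlen⟩
    obtain ⟨u, s, w', Q', hu, hs, hw', hQ', hlen', hR, rfl⟩ :=
      exists_eq_append_cons_of_admissible (by simpa using hk) hw hA hQ hlen
    refine ⟨u, s, w', hu, hs, hw', ⟨Q', hQ', hlen'⟩, ?_, rfl⟩
    rintro ⟨hsR, hL⟩
    exact hR hsR ((allOnes_iff_eq_replicate_L hw' hQ').mpr (by rw [hL, hlen']))
  · rintro ⟨u, s, w', hu, hs, hw', ⟨Q', hQ', hlen'⟩, hL, rfl⟩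
    refine admissible_append_cons hu hs hw' hQ' (by omega) fun hsR h1 => hL ⟨hsR, ?_⟩
    rw [(allOnes_iff_eq_replicate_L hw' hQ').mp h1, hlen']

theorem stmt16 (r : ℕ) (hr : 1 ≤ r) (α : List ℕ) (hα : α = List.replicate r 1)
    (k : ℕ) (hk : r < k) :
    ∀ w : List Letter,
      (∀ t ∈ w, t = Letter.L ∨ t = Letter.R ∨ ∃ j, 1 ≤ j ∧ j ≤ k ∧ t = Letter.U j) →
      ((Admissible w α ∧ ∃ Q, actWord w α = some Q ∧ Q.length = k) ↔
        ∃ u : List Letter, ∃ s : Letter, ∃ w' : List Letter,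
          (∀ t ∈ u, ∃ m, 1 ≤ m ∧ m ≤ k ∧ t = Letter.U m) ∧
          (s = Letter.L ∨ s = Letter.R) ∧
          Admissible w' α ∧ (∃ Q', actWord w' α = some Q' ∧ Q'.length = k - 1) ∧
          ¬(s = Letter.R ∧ w' = List.replicate (k - 1 - r) Letter.L) ∧
          w = u ++ s :: w') :=
  stmt16_general r α hα k hk
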